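/- Let X be a second-countable locally compact Hausdorff space and let κ be a kernel on X satisfying (R1), (R2), (R3). Let A ⊂ X, A ≠ X, with cp_*A > 0, and let ω be a nonzero positive Radon measure with either I(ω) < ∞, or ω concentrated on X∖A and ω(X) < ∞. Define Γ_{A,ω} := { ν ∈ E⁺ : U^ν ≥ U^ω nearly everywhere on A }. Then the inner balayage ω^A is the unique measure in Γ_{A,ω} of minimal energy norm: ‖ω^A‖ = min over ν ∈ Γ_{A,ω} of ‖ν‖. -/

import Mathlib

open MeasureTheory Filter Set Topology ENNReal CompactlySupported UniformConvergence

namespace Balayage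
open scoped Classical

variable {X : Type*} [TopologicalSpace X] [MeasurableSpace X]

/-- A kernel: symmetric, lower semicontinuous, `[0,∞]`-valued. -/
structure IsKernel (κ : X → X → ℝ≥0∞) : Prop where
  symm : ∀ x y, κ x y = κ y x
  lsc : LowerSemicontinuous fun p : X × X => κ p.1 p.2

/-- The potential `U^μ(x) = ∫ κ(x,y) dμ(y)`. -/
noncomputable def potential (κ : X → X → ℝ≥0∞) (μ : Measure X) (x : X) : ℝ≥0∞ :=
  ∫⁻ y, κ x y ∂μ

/-- The mutual energy `I(μ,ν) = ∫∫ κ(x,y) dν(y) dμ(x)` of two positive measures. -/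
noncomputable def energy (κ : X → X → ℝ≥0∞) (μ ν : Measure X) : ℝ≥0∞ :=
  ∫⁻ x, potential κ ν x ∂μ

/-- A positive Radon measure (regular Borel measure, finite on compacts). -/
def IsRadon (μ : Measure X) : Prop := μ.Regular

/-- Finite energy: `I(μ) < ∞`. -/
def FiniteEnergy (κ : X → X → ℝ≥0∞) (μ : Measure X) : Prop := energy κ μ μ < ⊤

/-- Membership in the cone `E⁺` of positive Radon measures of finite energy. -/
def memE (κ : X → X → ℝ≥0∞) (μ : Measure X) : Prop := IsRadon μ ∧ FiniteEnergy κ μ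

/-- Membership in `E⁺(A)`: measures of `E⁺` concentrated on `A`
(i.e. the complement of `A` is negligible). -/
def memEOn (κ : X → X → ℝ≥0∞) (A : Set X) (μ : Measure X) : Prop :=
  memE κ μ ∧ μ Aᶜ = 0

/-- The strong (energy) distance `‖μ-ν‖ = √(I(μ)+I(ν)-2I(μ,ν))`. -/
noncomputable def sDist (κ : X → X → ℝ≥0∞) (μ ν : Measure X) : ℝ :=
  Real.sqrt ((energy κ μ μ).toReal + (energy κ ν ν).toReal - 2 * (energy κ μ ν).toReal)

/-- Membership in `E'(A)`, the strong closure of `E⁺(A)` in `E⁺`. -/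
def memEClos (κ : X → X → ℝ≥0∞) (A : Set X) (μ : Measure X) : Prop :=
  memE κ μ ∧ ∀ ε : ℝ, 0 < ε → ∃ ν, memEOn κ A ν ∧ sDist κ μ ν < ε

/-- The capacity of a compact set: the inverse of the minimal energy of
probability measures concentrated on it. -/
noncomputable def capC (κ : X → X → ℝ≥0∞) (K : Set X) : ℝ≥0∞ :=
  (⨅ (μ : Measure X) (_ : IsProbabilityMeasure μ) (_ : μ Kᶜ = 0), energy κ μ μ)⁻¹

/-- The inner capacity `cp_* A`: supremum of capacities of compact subsets. -/
noncomputable def innerCap (κ : X → X → ℝ≥0∞) (A : Set X) : ℝ≥0∞ :=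
  ⨆ (K : Set X) (_ : IsCompact K) (_ : K ⊆ A), capC κ K

/-- The outer capacity `cp^* A`: infimum of inner capacities of open supersets. -/
noncomputable def outerCap (κ : X → X → ℝ≥0∞) (A : Set X) : ℝ≥0∞ :=
  ⨅ (D : Set X) (_ : IsOpen D) (_ : A ⊆ D), innerCap κ D

/-- Strict positive definiteness (energy principle), stated for pairs of positive
measures of finite energy: `I(μ-ν) ≥ 0`, with equality only for `μ = ν`. -/
def StrictlyPosDef (κ : X → X → ℝ≥0∞) : Prop :=
  ∀ μ ν : Measure X, IsRadon μ → IsRadon ν → FiniteEnergy κ μ → FiniteEnergy κ ν →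
    (2 * energy κ μ ν ≤ energy κ μ μ + energy κ ν ν) ∧
    (2 * energy κ μ ν = energy κ μ μ + energy κ ν ν → μ = ν)

/-- Vague convergence of a sequence of measures: convergence of integrals of
continuous compactly supported functions. -/
def VagueTendsto (μ : ℕ → Measure X) (μ₀ : Measure X) : Prop :=
  ∀ f : X → ℝ, Continuous f → HasCompactSupport f →
    Tendsto (fun j => ∫ x, f x ∂(μ j)) atTop (nhds (∫ x, f x ∂μ₀))

/-- A perfect kernel: strictly positive definite, `E⁺` strongly complete, and the strong
topology on `E⁺` finer than the vague topology (sequential formulation; sequences suffice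
on second-countable spaces). -/
structure Perfect (κ : X → X → ℝ≥0∞) : Prop where
  posdef : StrictlyPosDef κ
  complete : ∀ μ : ℕ → Measure X, (∀ j, memE κ (μ j)) →
    (∀ ε : ℝ, 0 < ε → ∃ N, ∀ m ≥ N, ∀ n ≥ N, sDist κ (μ m) (μ n) < ε) →
    ∃ μ₀, memE κ μ₀ ∧ Tendsto (fun j => sDist κ (μ j) μ₀) atTop (nhds 0)
  finerThanVague : ∀ (μ : ℕ → Measure X) (μ₀ : Measure X), (∀ j, memE κ (μ j)) →
    memE κ μ₀ → Tendsto (fun j => sDist κ (μ j) μ₀) atTop (nhds 0) → VagueTendsto μ μ₀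

/-- The domination principle. -/
def Domination (κ : X → X → ℝ≥0∞) : Prop :=
  ∀ μ ν : Measure X, memE κ μ → IsRadon ν →
    (∀ᵐ x ∂μ, potential κ μ x ≤ potential κ ν x) → ∀ x, potential κ μ x ≤ potential κ ν x

/-- `h`-Ugaheri's maximum principle; for `h = 1` this is Frostman's maximum principle. -/
def Ugaheri (κ : X → X → ℝ≥0∞) (h : ℝ) : Prop :=
  ∀ μ : Measure X, memE κ μ → ∀ c : ℝ, 0 < c →
    (∀ᵐ x ∂μ, potential κ μ x ≤ ENNReal.ofReal c) →
    ∀ x, potential κ μ x ≤ ENNReal.ofReal (h * c)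

/-- Condition (R1): the kernel is perfect and satisfies the domination and
`h`-Ugaheri maximum principles for some `h ∈ [1, ∞)`. -/
structure R1 (κ : X → X → ℝ≥0∞) : Prop where
  perfect : Perfect κ
  domination : Domination κ
  ugaheri : ∃ h : ℝ, 1 ≤ h ∧ Ugaheri κ h

/-- Condition (R2): `κ(x,y)` is continuous and finite off the diagonal. -/
def R2 (κ : X → X → ℝ≥0∞) : Prop :=
  ContinuousOn (fun p : X × X => κ p.1 p.2) {p : X × X | p.1 ≠ p.2} ∧
    ∀ x y : X, x ≠ y → κ x y ≠ ⊤

/-- Condition (R3): `κ(·,y) → 0` uniformly on compact sets as `y` tends to the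
Alexandroff point of `X`. -/
def R3 (κ : X → X → ℝ≥0∞) : Prop :=
  ∀ K : Set X, IsCompact K → ∀ ε : ℝ≥0∞, 0 < ε →
    ∃ K' : Set X, IsCompact K' ∧ ∀ y ∉ K', ∀ x ∈ K, κ x y < ε

/-- `μA` is the inner balayage of `ω` onto `A`: it belongs to `E'(A)` and its potential
coincides with that of `ω` nearly everywhere on `A` (up to a set of inner capacity zero). -/
def IsInnerBalayage (κ : X → X → ℝ≥0∞) (A : Set X) (ω μA : Measure X) : Prop :=
  memEClos κ A μA ∧ innerCap κ {x ∈ A | potential κ μA x ≠ potential κ ω x} = 0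

/-- `μA` is the outer balayage of `ω` onto `A`: it belongs to `E'(A)` and its potential
coincides with that of `ω` quasi-everywhere on `A` (up to a set of outer capacity zero). -/
def IsOuterBalayage (κ : X → X → ℝ≥0∞) (A : Set X) (ω μA : Measure X) : Prop :=
  memEClos κ A μA ∧ outerCap κ {x ∈ A | potential κ μA x ≠ potential κ ω x} = 0

/-- Membership in the class `Γ_{A,ω}` of positive finite-energy Radon measures whose
potential dominates that of `ω` nearly everywhere on `A`. -/
def memGamma (κ : X → X → ℝ≥0∞) (A : Set X) (ω ν : Measure X) : Prop :=
  memE κ ν ∧ innerCap κ {x ∈ A | ¬ potential κ ω x ≤ potential κ ν x} = 0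


section Statement7Aux

open Real

set_option linter.unusedSectionVars false in
/-- Elementary quadratic optimization lemma. -/
lemma quad_aux {a b d : ℝ} (hb : 0 ≤ b) (hd : 0 ≤ d)
    (h : ∀ t : ℝ, 0 ≤ t → 2 * t * a ≤ d ^ 2 + t ^ 2 * b) : a ≤ d * Real.sqrt b := by
  rcases le_or_gt a 0 with ha | ha
  · exact ha.trans (mul_nonneg hd (Real.sqrt_nonneg b))
  rcases eq_or_lt_of_le hb with hb0 | hb0
  · exfalso
    have h1 := h ((d ^ 2 + 1) / (2 * a)) (by positivity)
    rw [← hb0] at h1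
    have h2a : (0:ℝ) < 2 * a := by linarith
    have he : 2 * ((d ^ 2 + 1) / (2 * a)) * a = d ^ 2 + 1 := by field_simp
    rw [he] at h1
    linarith
  · have h2 := h (a / b) (by positivity)
    have hb' : b ≠ 0 := ne_of_gt hb0
    have hsq : a ^ 2 ≤ d ^ 2 * b := by
      have e1 : 2 * (a / b) * a = 2 * (a ^ 2 / b) := by field_simp
      rw [e1] at h2
      have e2 : (a / b) ^ 2 * b = a ^ 2 / b := by field_simp
      rw [e2] at h2
      have h3 : a ^ 2 / b ≤ d ^ 2 := by linarith
      have := (div_le_iff₀ hb0).1 h3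
      linarith
    calc a = Real.sqrt (a ^ 2) := (Real.sqrt_sq ha.le).symm
      _ ≤ Real.sqrt (d ^ 2 * b) := Real.sqrt_le_sqrt hsq
      _ = d * Real.sqrt b := by
          rw [Real.sqrt_mul (by positivity), Real.sqrt_sq hd]

variable [T2Space X] [LocallyCompactSpace X] [SecondCountableTopology X] [BorelSpace X]
variable {κ : X → X → ℝ≥0∞}

set_option linter.unusedSectionVars false

lemma IsKernel.measurable' (hκ : IsKernel κ) : Measurable fun p : X × X => κ p.1 p.2 :=
  hκ.lsc.measurable

lemma memE.sigmaFinite {μ : Measure X} (h : memE κ μ) : SigmaFinite μ := by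
  haveI : μ.Regular := h.1
  infer_instance

lemma measurable_potential (hκ : IsKernel κ) (ν : Measure X) [SFinite ν] :
    Measurable (potential κ ν) :=
  Measurable.lintegral_prod_right hκ.measurable'

lemma energy_symm (hκ : IsKernel κ) (μ ν : Measure X) [SFinite μ] [SFinite ν] :
    energy κ μ ν = energy κ ν μ := by
  unfold energy potential
  rw [lintegral_lintegral_swap hκ.measurable'.aemeasurable]
  exact lintegral_congr fun y => lintegral_congr fun x => hκ.symm x y

lemma energy_add_left (μ ν ρ : Measure X) :
    energy κ (μ + ν) ρ = energy κ μ ρ + energy κ ν ρ :=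
  lintegral_add_measure _ _ _

lemma energy_smul_left (c : ℝ≥0∞) (μ ρ : Measure X) :
    energy κ (c • μ) ρ = c * energy κ μ ρ :=
  lintegral_smul_measure _ _

lemma potential_add (μ ν : Measure X) (x : X) :
    potential κ (μ + ν) x = potential κ μ x + potential κ ν x :=
  lintegral_add_measure _ _ _

lemma potential_smul (c : ℝ≥0∞) (μ : Measure X) (x : X) :
    potential κ (c • μ) x = c * potential κ μ x :=
  lintegral_smul_measure _ _

lemma energy_add_right (hκ : IsKernel κ) (μ ν ρ : Measure X) [SFinite ν] :
    energy κ μ (ν + ρ) = energy κ μ ν + energy κ μ ρ := by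
  unfold energy
  simp_rw [potential_add]
  exact lintegral_add_left (measurable_potential hκ ν) _

lemma energy_smul_right' {c : ℝ≥0∞} (hc : c ≠ ⊤) (μ ν : Measure X) :
    energy κ μ (c • ν) = c * energy κ μ ν := by
  unfold energy
  simp_rw [potential_smul]
  exact lintegral_const_mul' _ _ hc

lemma energy_lt_top (hpd : StrictlyPosDef κ) {μ ν : Measure X}
    (hμ : memE κ μ) (hν : memE κ ν) : energy κ μ ν < ⊤ := by
  have h := (hpd μ ν hμ.1 hν.1 hμ.2 hν.2).1
  have h2 : energy κ μ ν ≤ 2 * energy κ μ ν := by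
    rw [two_mul]; exact le_add_self
  exact (h2.trans h).trans_lt (ENNReal.add_lt_top.2 ⟨hμ.2, hν.2⟩)

lemma memE.add (hκ : IsKernel κ) (hpd : StrictlyPosDef κ) {μ ν : Measure X}
    (hμ : memE κ μ) (hν : memE κ ν) : memE κ (μ + ν) := by
  haveI : μ.Regular := hμ.1
  haveI : ν.Regular := hν.1
  haveI := hμ.sigmaFinite
  haveI := hν.sigmaFinite
  constructor
  · haveI : IsFiniteMeasureOnCompacts (μ + ν) :=
      ⟨fun {K} hK => by
        simp only [Measure.add_apply]
        exact ENNReal.add_lt_top.2 ⟨hK.measure_lt_top, hK.measure_lt_top⟩⟩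
    show (μ + ν).Regular
    infer_instance
  · show energy κ (μ + ν) (μ + ν) < ⊤
    rw [energy_add_left, energy_add_right hκ, energy_add_right hκ]
    exact ENNReal.add_lt_top.2 ⟨ENNReal.add_lt_top.2 ⟨hμ.2, energy_lt_top hpd hμ hν⟩,
      ENNReal.add_lt_top.2 ⟨energy_lt_top hpd hν hμ, hν.2⟩⟩

lemma memE.smul {c : ℝ≥0∞} (hc : c ≠ ⊤) {μ : Measure X} (hμ : memE κ μ) :
    memE κ (c • μ) := by
  haveI : μ.Regular := hμ.1
  refine ⟨Measure.Regular.smul hc, ?_⟩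
  show energy κ (c • μ) (c • μ) < ⊤
  rw [energy_smul_left, energy_smul_right' hc]
  exact ENNReal.mul_lt_top hc.lt_top (ENNReal.mul_lt_top hc.lt_top hμ.2)

lemma sDist_symm (hκ : IsKernel κ) {μ ν : Measure X} (hμ : memE κ μ) (hν : memE κ ν) :
    sDist κ μ ν = sDist κ ν μ := by
  haveI := hμ.sigmaFinite
  haveI := hν.sigmaFinite
  unfold sDist
  rw [energy_symm hκ ν μ]
  congr 1
  ring

lemma energy_diff_nonneg (hpd : StrictlyPosDef κ) {μ ν : Measure X}
    (hμ : memE κ μ) (hν : memE κ ν) :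
    0 ≤ (energy κ μ μ).toReal + (energy κ ν ν).toReal - 2 * (energy κ μ ν).toReal := by
  have h := (hpd μ ν hμ.1 hν.1 hμ.2 hν.2).1
  have h2 := ENNReal.toReal_mono (ENNReal.add_lt_top.2 ⟨hμ.2, hν.2⟩).ne h
  rw [ENNReal.toReal_mul, ENNReal.toReal_add hμ.2.ne hν.2.ne] at h2
  norm_num at h2
  linarith

/-- Cauchy–Schwarz-type comparison of mutual energies. -/
lemma energy_cs (hκ : IsKernel κ) (hpd : StrictlyPosDef κ) {μ ν ρ : Measure X}
    (hμ : memE κ μ) (hν : memE κ ν) (hρ : memE κ ρ) :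
    (energy κ ν ρ).toReal ≤ (energy κ μ ρ).toReal
      + sDist κ μ ν * Real.sqrt (energy κ ρ ρ).toReal := by
  haveI := hμ.sigmaFinite
  haveI := hν.sigmaFinite
  haveI := hρ.sigmaFinite
  have hEμν : energy κ μ ν ≠ ⊤ := (energy_lt_top hpd hμ hν).ne
  have hEμρ : energy κ μ ρ ≠ ⊤ := (energy_lt_top hpd hμ hρ).ne
  have hEνρ : energy κ ν ρ ≠ ⊤ := (energy_lt_top hpd hν hρ).ne
  have hd2 : sDist κ μ ν ^ 2
      = (energy κ μ μ).toReal + (energy κ ν ν).toReal - 2 * (energy κ μ ν).toReal :=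
    Real.sq_sqrt (energy_diff_nonneg hpd hμ hν)
  have key : ∀ t : ℝ, 0 ≤ t →
      2 * t * ((energy κ ν ρ).toReal - (energy κ μ ρ).toReal)
        ≤ sDist κ μ ν ^ 2 + t ^ 2 * (energy κ ρ ρ).toReal := by
    intro t ht
    rw [hd2]
    set c : ℝ≥0∞ := ENNReal.ofReal t with hc
    have hcne : c ≠ ⊤ := ENNReal.ofReal_ne_top
    have hct : c.toReal = t := ENNReal.toReal_ofReal ht
    have hρ' : memE κ (c • ρ) := hρ.smul hcne
    have hμ' : memE κ (μ + c • ρ) := hμ.add hκ hpd hρ'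
    have hposdef := (hpd (μ + c • ρ) ν hμ'.1 hν.1 hμ'.2 hν.2).1
    have expandL : energy κ (μ + c • ρ) ν = energy κ μ ν + c * energy κ ν ρ := by
      rw [energy_add_left, energy_smul_left, energy_symm hκ ρ ν]
    have expandR : energy κ (μ + c • ρ) (μ + c • ρ)
        = energy κ μ μ + c * energy κ μ ρ + c * energy κ μ ρ + c * c * energy κ ρ ρ := by
      simp only [energy_add_left, energy_add_right hκ, energy_smul_left,
        energy_smul_right' hcne]
      rw [energy_symm hκ ρ μ]
      ring
    have hE2ne : energy κ (μ + c • ρ) (μ + c • ρ) ≠ ⊤ := hμ'.2.ne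
    have h2 := ENNReal.toReal_mono (ENNReal.add_ne_top.2 ⟨hE2ne, hν.2.ne⟩) hposdef
    rw [ENNReal.toReal_mul, ENNReal.toReal_add hE2ne hν.2.ne, expandL, expandR,
      ENNReal.toReal_add hEμν (ENNReal.mul_ne_top hcne hEνρ),
      ENNReal.toReal_add (ENNReal.add_ne_top.2 ⟨ENNReal.add_ne_top.2
        ⟨hμ.2.ne, ENNReal.mul_ne_top hcne hEμρ⟩, ENNReal.mul_ne_top hcne hEμρ⟩)
        (ENNReal.mul_ne_top (ENNReal.mul_ne_top hcne hcne) hρ.2.ne),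
      ENNReal.toReal_add (ENNReal.add_ne_top.2 ⟨hμ.2.ne, ENNReal.mul_ne_top hcne hEμρ⟩)
        (ENNReal.mul_ne_top hcne hEμρ),
      ENNReal.toReal_add hμ.2.ne (ENNReal.mul_ne_top hcne hEμρ),
      ENNReal.toReal_mul, ENNReal.toReal_mul, ENNReal.toReal_mul, ENNReal.toReal_mul,
      hct] at h2
    norm_num at h2
    nlinarith [h2]
  have h := quad_aux ENNReal.toReal_nonneg (Real.sqrt_nonneg _) key
  have h' : (energy κ ν ρ).toReal - (energy κ μ ρ).toReal
      ≤ sDist κ μ ν * Real.sqrt (energy κ ρ ρ).toReal := h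
  linarith


lemma innerCap_mono {S T : Set X} (h : S ⊆ T) : innerCap κ S ≤ innerCap κ T := by
  refine iSup_le fun K => iSup_le fun hK => iSup_le fun hKS => ?_
  exact le_iSup_of_le K (le_iSup_of_le hK (le_iSup_of_le (hKS.trans h) le_rfl))

/-- A finite-energy Radon measure concentrated on `A` does not charge Borel sets whose
intersection with `A` has inner capacity zero. -/
lemma null_of_innerCap_zero (hpd : StrictlyPosDef κ) {A : Set X} {ν : Measure X}
    (hν : memE κ ν) (hνA : ν Aᶜ = 0) {B : Set X} (hB : MeasurableSet B)
    (hcap0 : innerCap κ (A ∩ B) = 0) : ν B = 0 := by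
  haveI : ν.Regular := hν.1
  obtain ⟨N, hAN, hNm, hN0⟩ := exists_measurable_superset_of_null hνA
  set S := B ∩ Nᶜ with hSdef
  have hSm : MeasurableSet S := hB.inter hNm.compl
  have hSA : S ⊆ A ∩ B := fun x hx => ⟨by_contra fun h => hx.2 (hAN h), hx.1⟩
  have hS0 : ν S = 0 := by
    by_contra h0
    obtain ⟨n, hn⟩ : ∃ n, ν (S ∩ compactCovering X n) ≠ 0 := by
      by_contra hall
      push_neg at hall
      apply h0
      have hU : S = ⋃ n, S ∩ compactCovering X n := by
        rw [← Set.inter_iUnion, iUnion_compactCovering, Set.inter_univ]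
      refine le_antisymm ?_ (zero_le)
      rw [hU]
      calc ν (⋃ n, S ∩ compactCovering X n) ≤ ∑' n, ν (S ∩ compactCovering X n) :=
            measure_iUnion_le _
        _ = 0 := by simp [hall]
    set T := S ∩ compactCovering X n with hT
    have hTm : MeasurableSet T :=
      hSm.inter (isCompact_compactCovering X n).isClosed.measurableSet
    have hTfin : ν T ≠ ⊤ := ((measure_mono Set.inter_subset_right).trans_lt
      (isCompact_compactCovering X n).measure_lt_top).ne
    obtain ⟨K, hKT, hKc, hK⟩ := hTm.exists_isCompact_lt_add hTfin (ε := ν T) hn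
    have hK0 : ν K ≠ 0 := by
      intro h
      rw [h, zero_add] at hK
      exact lt_irrefl _ hK
    have hKfin : ν K ≠ ⊤ := hKc.measure_lt_top.ne
    set p : Measure X := (ν K)⁻¹ • ν.restrict K with hp
    haveI hpprob : IsProbabilityMeasure p := by
      constructor
      rw [hp, Measure.smul_apply, smul_eq_mul, Measure.restrict_apply_univ]
      exact ENNReal.inv_mul_cancel hK0 hKfin
    have hpK : p Kᶜ = 0 := by
      rw [hp, Measure.smul_apply, smul_eq_mul,
        Measure.restrict_apply hKc.isClosed.measurableSet.compl]
      simp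
    have hpE : energy κ p p < ⊤ := by
      have hres : energy κ (ν.restrict K) (ν.restrict K) ≤ energy κ ν ν :=
        lintegral_mono' Measure.restrict_le_self fun x =>
          lintegral_mono' Measure.restrict_le_self le_rfl
      have he : energy κ p p
          = (ν K)⁻¹ * ((ν K)⁻¹ * energy κ (ν.restrict K) (ν.restrict K)) := by
        rw [hp, energy_smul_left, energy_smul_right' (ENNReal.inv_ne_top.2 hK0)]
      rw [he]
      exact ENNReal.mul_lt_top (ENNReal.inv_ne_top.2 hK0).lt_top
        (ENNReal.mul_lt_top (ENNReal.inv_ne_top.2 hK0).lt_top (hres.trans_lt hν.2))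
    have hinf : (⨅ (μ' : Measure X) (_ : IsProbabilityMeasure μ') (_ : μ' Kᶜ = 0),
        energy κ μ' μ') ≤ energy κ p p := by
      refine iInf_le_of_le p ?_
      refine iInf_le_of_le hpprob ?_
      exact iInf_le _ hpK
    have hcapKpos : 0 < capC κ K := by
      rw [capC]
      exact ENNReal.inv_pos.2 (hinf.trans_lt hpE).ne
    have hle : capC κ K ≤ innerCap κ (A ∩ B) := by
      refine le_iSup_of_le K ?_
      refine le_iSup_of_le hKc ?_
      exact le_iSup_of_le ((hKT.trans Set.inter_subset_left).trans hSA) le_rfl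
    rw [hcap0] at hle
    exact lt_irrefl 0 (hcapKpos.trans_le hle)
  have hBsub : B ⊆ S ∪ N := fun x hx =>
    (em (x ∈ N)).elim Or.inr fun h => Or.inl ⟨hx, h⟩
  refine le_antisymm ?_ (zero_le)
  calc ν B ≤ ν (S ∪ N) := measure_mono hBsub
    _ ≤ ν S + ν N := measure_union_le _ _
    _ = 0 := by rw [hS0, hN0, add_zero]

/-- The key inequality: `I(ωᴬ) ≤ I(ωᴬ, ν)` for every `ν ∈ Γ_{A,ω}`. -/
lemma energy_le_cross (hκ : IsKernel κ) (hpd : StrictlyPosDef κ)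
    {A : Set X} {ω ωA ν : Measure X} (hωR : IsRadon ω)
    (hbal : IsInnerBalayage κ A ω ωA) (hν : memGamma κ A ω ν) :
    energy κ ωA ωA ≤ energy κ ωA ν := by
  have hEωA : memE κ ωA := hbal.1.1
  have hEν : memE κ ν := hν.1
  haveI : ω.Regular := hωR
  haveI : SigmaFinite ω := by infer_instance
  haveI := hEωA.sigmaFinite
  haveI := hEν.sigmaFinite
  set B1 : Set X := {x | potential κ ωA x < potential κ ω x}
      ∪ {x | potential κ ω x < potential κ ωA x} with hB1
  set B2 : Set X := {x | potential κ ν x < potential κ ω x} with hB2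
  have hB1m : MeasurableSet B1 :=
    (measurableSet_lt (measurable_potential hκ ωA) (measurable_potential hκ ω)).union
      (measurableSet_lt (measurable_potential hκ ω) (measurable_potential hκ ωA))
  have hB2m : MeasurableSet B2 :=
    measurableSet_lt (measurable_potential hκ ν) (measurable_potential hκ ω)
  have hcap1 : innerCap κ (A ∩ B1) = 0 := by
    have he : A ∩ B1 = {x ∈ A | potential κ ωA x ≠ potential κ ω x} := by
      ext x
      simp only [hB1, Set.mem_inter_iff, Set.mem_union, Set.mem_setOf_eq, Set.mem_sep_iff]
      exact and_congr_right fun _ => lt_or_lt_iff_ne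
    rw [he]
    exact hbal.2
  have hcap2 : innerCap κ (A ∩ B2) = 0 := by
    have he : A ∩ B2 = {x ∈ A | ¬ potential κ ω x ≤ potential κ ν x} := by
      ext x
      simp only [hB2, Set.mem_inter_iff, Set.mem_setOf_eq, Set.mem_sep_iff, not_le]
    rw [he]
    exact hν.2
  have main : ∀ ε : ℝ, 0 < ε → (energy κ ωA ωA).toReal ≤ (energy κ ωA ν).toReal + ε := by
    intro ε hε
    set c : ℝ := Real.sqrt (energy κ ωA ωA).toReal + Real.sqrt (energy κ ν ν).toReal
      with hcdef
    have hc0 : 0 ≤ c := by positivity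
    set δ : ℝ := ε / (c + 1) with hδdef
    have hδ : 0 < δ := by positivity
    obtain ⟨μ, hμOn, hdist⟩ := hbal.1.2 δ hδ
    have hEμ : memE κ μ := hμOn.1
    haveI := hEμ.sigmaFinite
    have hμ1 : μ B1 = 0 := null_of_innerCap_zero hpd hEμ hμOn.2 hB1m hcap1
    have hμ2 : μ B2 = 0 := null_of_innerCap_zero hpd hEμ hμOn.2 hB2m hcap2
    have hae : ∀ᵐ x ∂μ, potential κ ωA x ≤ potential κ ν x := by
      rw [ae_iff]
      have hU : μ (B1 ∪ B2) = 0 :=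
        le_antisymm ((measure_union_le _ _).trans (by rw [hμ1, hμ2, add_zero])) (zero_le)
      refine measure_mono_null ?_ hU
      intro x hx
      simp only [Set.mem_setOf_eq, not_le] at hx
      by_cases h1 : x ∈ B1
      · exact Or.inl h1
      · right
        simp only [hB1, Set.mem_union, Set.mem_setOf_eq, not_or, not_lt] at h1
        have heq : potential κ ωA x = potential κ ω x := le_antisymm h1.2 h1.1
        show potential κ ν x < potential κ ω x
        rw [← heq]
        exact hx
    have hmono : energy κ μ ωA ≤ energy κ μ ν := lintegral_mono_ae hae
    have h1 : (energy κ ωA ωA).toReal ≤ (energy κ μ ωA).toReal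
        + sDist κ μ ωA * Real.sqrt (energy κ ωA ωA).toReal :=
      energy_cs hκ hpd hEμ hEωA hEωA
    have h2 : (energy κ μ ωA).toReal ≤ (energy κ μ ν).toReal :=
      ENNReal.toReal_mono (energy_lt_top hpd hEμ hEν).ne hmono
    have h3 : (energy κ μ ν).toReal ≤ (energy κ ωA ν).toReal
        + sDist κ ωA μ * Real.sqrt (energy κ ν ν).toReal :=
      energy_cs hκ hpd hEωA hEμ hEν
    rw [sDist_symm hκ hEμ hEωA] at h1
    have hsd0 : 0 ≤ sDist κ ωA μ := Real.sqrt_nonneg _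
    have hbound : sDist κ ωA μ * c ≤ δ * c := mul_le_mul_of_nonneg_right hdist.le hc0
    have hδc : δ * c ≤ ε := by
      rw [hδdef, div_mul_eq_mul_div]
      exact (div_le_iff₀ (by linarith)).2 (by nlinarith)
    have expand : sDist κ ωA μ * Real.sqrt (energy κ ωA ωA).toReal
        + sDist κ ωA μ * Real.sqrt (energy κ ν ν).toReal = sDist κ ωA μ * c := by
      rw [hcdef]
      ring
    linarith
  have hfin1 : energy κ ωA ωA ≠ ⊤ := hEωA.2.ne
  have hfin2 : energy κ ωA ν ≠ ⊤ := (energy_lt_top hpd hEωA hEν).ne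
  rw [← ENNReal.toReal_le_toReal hfin1 hfin2]
  exact le_of_forall_pos_le_add main

end Statement7Aux

/-- `ω^A` is the unique measure in `Γ_{A,ω}` of minimal energy norm. -/
theorem inner_balayage_min_energy
    {X : Type*} [TopologicalSpace X] [T2Space X] [LocallyCompactSpace X]
    [SecondCountableTopology X] [MeasurableSpace X] [BorelSpace X]
    (κ : X → X → ℝ≥0∞) (hκ : IsKernel κ) (hR1 : R1 κ) (hR2 : R2 κ) (hR3 : R3 κ)
    (A : Set X) (hA : A ≠ Set.univ) (hcap : 0 < innerCap κ A)
    (ω : Measure X) (hωR : IsRadon ω) (hω0 : ω ≠ 0)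
    (hfin : FiniteEnergy κ ω ∨ (ω A = 0 ∧ ω Set.univ < ⊤))
    (ωA : Measure X) (hωA : IsInnerBalayage κ A ω ωA) :
    memGamma κ A ω ωA ∧
    (∀ ν : Measure X, memGamma κ A ω ν → energy κ ωA ωA ≤ energy κ ν ν) ∧
    (∀ μ : Measure X, memGamma κ A ω μ →
      (∀ ν : Measure X, memGamma κ A ω ν → energy κ μ μ ≤ energy κ ν ν) → μ = ωA) := by
  have hpd := hR1.perfect.posdef
  have hEωA : memE κ ωA := hωA.1.1
  have part1 : memGamma κ A ω ωA := by
    refine ⟨hEωA, ?_⟩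
    have hsub : {x ∈ A | ¬ potential κ ω x ≤ potential κ ωA x}
        ⊆ {x ∈ A | potential κ ωA x ≠ potential κ ω x} :=
      fun x hx => ⟨hx.1, fun he => hx.2 he.ge⟩
    exact le_antisymm ((innerCap_mono hsub).trans_eq hωA.2) (zero_le)
  have part2 : ∀ ν : Measure X, memGamma κ A ω ν → energy κ ωA ωA ≤ energy κ ν ν := by
    intro ν hν
    have h1 := energy_le_cross hκ hpd hωR hωA hν
    have h2 := (hpd ωA ν hEωA.1 hν.1.1 hEωA.2 hν.1.2).1
    have h3 : energy κ ωA ωA + energy κ ωA ωA ≤ energy κ ωA ωA + energy κ ν ν := by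
      calc energy κ ωA ωA + energy κ ωA ωA = 2 * energy κ ωA ωA := (two_mul _).symm
        _ ≤ 2 * energy κ ωA ν := mul_le_mul_right h1 2
        _ ≤ energy κ ωA ωA + energy κ ν ν := h2
    exact (ENNReal.add_le_add_iff_left hEωA.2.ne).1 h3
  refine ⟨part1, part2, ?_⟩
  intro μ hμ hmin
  have hEμ : memE κ μ := hμ.1
  have heq : energy κ μ μ = energy κ ωA ωA := le_antisymm (hmin ωA part1) (part2 μ hμ)
  have h1 := energy_le_cross hκ hpd hωR hωA hμ
  have h2 := hpd ωA μ hEωA.1 hEμ.1 hEωA.2 hEμ.2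
  have h3 : 2 * energy κ ωA μ = energy κ ωA ωA + energy κ μ μ := by
    refine le_antisymm h2.1 ?_
    calc energy κ ωA ωA + energy κ μ μ = 2 * energy κ ωA ωA := by rw [heq, two_mul]
      _ ≤ 2 * energy κ ωA μ := mul_le_mul_right h1 2
  exact (h2.2 h3).symm

end Balayage
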